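/- Let λ₁, λ₂ be probability measures on a measurable space and {Pₙ} a sequence of Markov kernels. Suppose there exist sets Cₙ, constants εₙ ∈ (0,1), and probability measures νₙ concentrated on Cₙ such that λ₁, λ₂ are concentrated on C₀, Pₙ(x, Cₙ) = 1 for all x ∈ Cₙ₋₁, and εₙ νₙ(A) ≤ Pₙ(x, A) ≤ εₙ⁻¹ νₙ(A) for all x ∈ Cₙ₋₁ and measurable A. Then for any k ≥ 1, ‖(λ₁ − λ₂)P_{1:k}‖_tv ≤ ϑ_k ‖λ₁ − λ₂‖_tv where ϑ_k = (2/(ε₁² log 3)) ∏_{i=2}^{k} (1−ε_i²)/(1+ε_i²). -/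

import Mathlib

/-!
On `C (n-1)` the kernel `P n` dominates `ε n • ν n`, so this common part cancels in
`(λ₁ - λ₂) P n` and what remains is a sub-Markov kernel of mass `1 - ε n`. Integrating a
function with values in `[0, 1 - ε n]` against `λ₁ - λ₂` and splitting along a Hahn set gives the
one-step contraction factor `1 - ε n` of the total variation distance. The pushed-forward
measures stay concentrated on `C n`, so the steps compose, and `∏ (1 - ε i) ≤ ϑ_k` because
`1 - ε ≤ (1 - ε²) / (1 + ε²)` and `2 / (ε₁² log 3) ≥ 1`.
-/

open MeasureTheory Finset
open scoped ENNReal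

/-- Total variation distance: `sup_A |μ(A) - ν(A)|`. -/
noncomputable def tvDist {R : Type*} [MeasurableSpace R] (μ ν : Measure R) : ℝ :=
  ⨆ s : {s : Set R // MeasurableSet s}, |(μ s.1).toReal - (ν s.1).toReal|

/-- `pushSeq λ P k = λ P₁ P₂ ⋯ P_k`, the initial measure pushed through the
first `k` Markov kernels. -/
noncomputable def pushSeq {R : Type*} [MeasurableSpace R]
    (lam : Measure R) (P : ℕ → R → Measure R) : ℕ → Measure R
  | 0 => lam
  | k + 1 => (pushSeq lam P k).bind (P (k + 1))

section TotalVariation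

variable {R : Type*} [MeasurableSpace R]

lemma tvDist_nonneg (μ ν : Measure R) : 0 ≤ tvDist μ ν :=
  Real.iSup_nonneg fun _ => abs_nonneg _

lemma tvDist_comm (μ ν : Measure R) : tvDist μ ν = tvDist ν μ := by
  simp only [tvDist, abs_sub_comm]

variable {μ ν : Measure R} [IsFiniteMeasure μ] [IsFiniteMeasure ν]

lemma bddAbove_range_abs_toReal_sub :
    BddAbove (Set.range fun s : {s : Set R // MeasurableSet s} =>
      |(μ s.1).toReal - (ν s.1).toReal|) := by
  refine ⟨(μ Set.univ).toReal + (ν Set.univ).toReal, ?_⟩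
  rintro _ ⟨s, rfl⟩
  have hμ := ENNReal.toReal_mono (measure_ne_top μ _) (measure_mono (Set.subset_univ s.1))
  have hν := ENNReal.toReal_mono (measure_ne_top ν _) (measure_mono (Set.subset_univ s.1))
  rw [abs_sub_le_iff]
  constructor <;> linarith [ENNReal.toReal_nonneg (a := μ s.1), ENNReal.toReal_nonneg (a := ν s.1)]

lemma apply_le_add_tvDist {s : Set R} (hs : MeasurableSet s) :
    μ s ≤ ν s + ENNReal.ofReal (tvDist μ ν) := by
  have h : (μ s).toReal ≤ (ν s).toReal + tvDist μ ν := by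
    have : (μ s).toReal - (ν s).toReal ≤ tvDist μ ν :=
      (le_abs_self _).trans (le_ciSup (bddAbove_range_abs_toReal_sub (μ := μ) (ν := ν)) ⟨s, hs⟩)
    linarith
  rw [← ENNReal.ofReal_toReal (measure_ne_top μ s), ← ENNReal.ofReal_toReal (measure_ne_top ν s),
    ← ENNReal.ofReal_add ENNReal.toReal_nonneg (tvDist_nonneg μ ν)]
  exact ENNReal.ofReal_le_ofReal h

lemma tvDist_le_of_forall_apply_le {t : ℝ} (ht : 0 ≤ t)
    (h : ∀ s, MeasurableSet s → μ s ≤ ν s + ENNReal.ofReal t ∧ ν s ≤ μ s + ENNReal.ofReal t) :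
    tvDist μ ν ≤ t := by
  refine ciSup_le fun ⟨s, hs⟩ => abs_sub_le_iff.2 ⟨?_, ?_⟩
  all_goals
    rw [sub_le_iff_le_add', ← ENNReal.toReal_ofReal ht, ← ENNReal.toReal_add (measure_ne_top _ _)
      ENNReal.ofReal_ne_top]
    refine ENNReal.toReal_mono (by finiteness) ?_
  exacts [(h s hs).1, (h s hs).2]

/-- Hahn decomposition: `ρ = (μ - ν)` restricted to a positive set of `μ - ν`. -/
lemma exists_le_add_measure_univ_le_tvDist :
    ∃ ρ : Measure R, μ ≤ ν + ρ ∧ ρ Set.univ ≤ ENNReal.ofReal (tvDist μ ν) := by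
  obtain ⟨S, hS, hνμ, hμν⟩ := hahn_decomposition μ ν
  have hS_le : ν.restrict S ≤ μ.restrict S := Measure.le_iff.2 fun t ht => by
    simpa only [Measure.restrict_apply ht] using hνμ _ (ht.inter hS) Set.inter_subset_right
  have hSc_le : μ.restrict Sᶜ ≤ ν.restrict Sᶜ := Measure.le_iff.2 fun t ht => by
    simpa only [Measure.restrict_apply ht] using hμν _ (ht.inter hS.compl) Set.inter_subset_right
  refine ⟨μ.restrict S - ν.restrict S, ?_, ?_⟩
  · calc μ = μ.restrict S + μ.restrict Sᶜ := (Measure.restrict_add_restrict_compl hS).symm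
      _ ≤ (μ.restrict S - ν.restrict S + ν.restrict S) + ν.restrict Sᶜ := by
        rw [Measure.sub_add_cancel_of_le hS_le]; gcongr
      _ = ν + (μ.restrict S - ν.restrict S) := by
        rw [add_comm _ (ν.restrict S), add_assoc, add_comm _ (ν.restrict Sᶜ), ← add_assoc,
          Measure.restrict_add_restrict_compl hS]
  · rw [Measure.sub_apply MeasurableSet.univ hS_le, Measure.restrict_apply_univ,
      Measure.restrict_apply_univ, tsub_le_iff_left]
    exact apply_le_add_tvDist hS

lemma lintegral_le_lintegral_add_tvDist {f : R → ℝ≥0∞} {b : ℝ≥0∞} (hf : ∀ x, f x ≤ b) :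
    ∫⁻ x, f x ∂μ ≤ ∫⁻ x, f x ∂ν + b * ENNReal.ofReal (tvDist μ ν) := by
  obtain ⟨ρ, hμ, hρ⟩ := exists_le_add_measure_univ_le_tvDist (μ := μ) (ν := ν)
  calc ∫⁻ x, f x ∂μ ≤ ∫⁻ x, f x ∂(ν + ρ) := lintegral_mono' hμ le_rfl
    _ = ∫⁻ x, f x ∂ν + ∫⁻ x, f x ∂ρ := lintegral_add_measure f ν ρ
    _ ≤ ∫⁻ x, f x ∂ν + b * ρ Set.univ := by
      gcongr; exact (lintegral_mono hf).trans_eq (lintegral_const b)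
    _ ≤ ∫⁻ x, f x ∂ν + b * ENNReal.ofReal (tvDist μ ν) := by gcongr

end TotalVariation

section Minorization

variable {R : Type*} [MeasurableSpace R]

lemma apply_sub_le_one_sub_of_minorized {p ν : Measure R} [IsProbabilityMeasure p]
    [IsProbabilityMeasure ν] {c : ℝ≥0∞} (hc : c ≤ 1)
    (hmin : ∀ A, MeasurableSet A → c * ν A ≤ p A) {A : Set R} (hA : MeasurableSet A) :
    p A - c * ν A ≤ 1 - c := by
  rw [tsub_le_iff_right]
  have hfin : c * ν Aᶜ ≠ ∞ :=
    ENNReal.mul_ne_top (ne_top_of_le_ne_top ENNReal.one_ne_top hc) (measure_ne_top ν _)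
  refine (ENNReal.add_le_add_iff_right hfin).1 ?_
  calc p A + c * ν Aᶜ ≤ p A + p Aᶜ := by gcongr; exact hmin _ hA.compl
    _ = 1 - c + c * (ν A + ν Aᶜ) := by
      rw [prob_add_prob_compl hA, prob_add_prob_compl hA, mul_one, tsub_add_cancel_of_le hc]
    _ = 1 - c + c * ν A + c * ν Aᶜ := by rw [mul_add, add_assoc]

lemma bind_apply_eq_one {μ : Measure R} [IsProbabilityMeasure μ] {P : R → Measure R}
    (hP : Measurable P) {C C' : Set R} (hC : MeasurableSet C) (hC' : MeasurableSet C')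
    (hμ : μ C = 1) (hPC : ∀ x ∈ C, P x C' = 1) : μ.bind P C' = 1 := by
  have hae : ∀ᵐ x ∂μ, x ∈ C := (mem_ae_iff_prob_eq_one hC).2 hμ
  rw [Measure.bind_apply hC' hP.aemeasurable,
    lintegral_congr_ae (hae.mono fun x hx => hPC x hx), lintegral_const, measure_univ, one_mul]

variable {μ₁ μ₂ ν : Measure R} [IsProbabilityMeasure μ₁] [IsProbabilityMeasure μ₂]
  [IsProbabilityMeasure ν] {P : R → Measure R} {C : Set R}

lemma bind_apply_le_add_tvDist (hP : Measurable P) (hPp : ∀ x ∈ C, IsProbabilityMeasure (P x))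
    (hC : MeasurableSet C) (hμ₁ : μ₁ C = 1) (hμ₂ : μ₂ C = 1) {c : ℝ≥0∞} (hc : c ≤ 1)
    (hmin : ∀ x ∈ C, ∀ A, MeasurableSet A → c * ν A ≤ P x A) {A : Set R} (hA : MeasurableSet A) :
    μ₁.bind P A ≤ μ₂.bind P A + (1 - c) * ENNReal.ofReal (tvDist μ₁ μ₂) := by
  set g := C.indicator fun x => P x A - c * ν A
  have hbind : ∀ μ : Measure R, [IsProbabilityMeasure μ] → μ C = 1 →
      μ.bind P A = ∫⁻ x, g x ∂μ + c * ν A := by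
    intro μ _ hμ
    have hae : ∀ᵐ x ∂μ, x ∈ C := (mem_ae_iff_prob_eq_one hC).2 hμ
    calc μ.bind P A = ∫⁻ x, (g x + c * ν A) ∂μ := by
          rw [Measure.bind_apply hA hP.aemeasurable]
          refine lintegral_congr_ae (hae.mono fun x hx => ?_)
          simp [g, hx, tsub_add_cancel_of_le (hmin x hx A hA)]
      _ = ∫⁻ x, g x ∂μ + c * ν A := by
          rw [lintegral_add_right _ measurable_const, lintegral_const, measure_univ, mul_one]
  have hg : ∀ x, g x ≤ 1 - c := by
    intro x
    by_cases hx : x ∈ C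
    · have := hPp x hx
      simpa [g, hx] using apply_sub_le_one_sub_of_minorized hc (hmin x hx) hA
    · simp [g, hx]
  rw [hbind μ₁ hμ₁, hbind μ₂ hμ₂, add_right_comm]
  gcongr
  exact lintegral_le_lintegral_add_tvDist hg

lemma tvDist_bind_le_of_minorized (hP : Measurable P) (hPp : ∀ x, IsProbabilityMeasure (P x))
    (hC : MeasurableSet C) (hμ₁ : μ₁ C = 1) (hμ₂ : μ₂ C = 1) {c : ℝ} (hc0 : 0 ≤ c) (hc1 : c ≤ 1)
    (hmin : ∀ x ∈ C, ∀ A, MeasurableSet A → ENNReal.ofReal c * ν A ≤ P x A) :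
    tvDist (μ₁.bind P) (μ₂.bind P) ≤ (1 - c) * tvDist μ₁ μ₂ := by
  have := isProbabilityMeasure_bind hP.aemeasurable (m := μ₁) (.of_forall hPp)
  have := isProbabilityMeasure_bind hP.aemeasurable (m := μ₂) (.of_forall hPp)
  have hc : ENNReal.ofReal c ≤ 1 := ENNReal.ofReal_le_one.2 hc1
  have hcoeff : (1 - ENNReal.ofReal c) * ENNReal.ofReal (tvDist μ₁ μ₂) =
      ENNReal.ofReal ((1 - c) * tvDist μ₁ μ₂) := by
    rw [ENNReal.ofReal_mul (by linarith), ENNReal.ofReal_sub 1 hc0, ENNReal.ofReal_one]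
  refine tvDist_le_of_forall_apply_le (mul_nonneg (by linarith) (tvDist_nonneg μ₁ μ₂))
    fun A hA => ⟨?_, ?_⟩
  · rw [← hcoeff]
    exact bind_apply_le_add_tvDist hP (fun x _ => hPp x) hC hμ₁ hμ₂ hc hmin hA
  · rw [← hcoeff, tvDist_comm]
    exact bind_apply_le_add_tvDist hP (fun x _ => hPp x) hC hμ₂ hμ₁ hc hmin hA

end Minorization

section Sequence

variable {R : Type*} [MeasurableSpace R] {lam lam1 lam2 : Measure R} {P : ℕ → R → Measure R}

lemma isProbabilityMeasure_pushSeq [IsProbabilityMeasure lam] (hP : ∀ n, Measurable (P n))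
    (hPp : ∀ n x, IsProbabilityMeasure (P n x)) (n : ℕ) :
    IsProbabilityMeasure (pushSeq lam P n) := by
  induction n with
  | zero => assumption
  | succ n ih => exact isProbabilityMeasure_bind (hP _).aemeasurable (.of_forall (hPp _))

lemma pushSeq_apply_eq_one [IsProbabilityMeasure lam] (hP : ∀ n, Measurable (P n))
    (hPp : ∀ n x, IsProbabilityMeasure (P n x)) {C : ℕ → Set R} (hC : ∀ n, MeasurableSet (C n))
    (hlam : lam (C 0) = 1) (habsorb : ∀ n, ∀ x ∈ C n, P (n + 1) x (C (n + 1)) = 1) (n : ℕ) :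
    pushSeq lam P n (C n) = 1 := by
  induction n with
  | zero => exact hlam
  | succ n ih =>
    have := isProbabilityMeasure_pushSeq hP hPp (lam := lam) n
    exact bind_apply_eq_one (hP _) (hC n) (hC _) ih (habsorb n)

theorem tvDist_pushSeq_le_prod [IsProbabilityMeasure lam1] [IsProbabilityMeasure lam2]
    (hP : ∀ n, Measurable (P n)) (hPp : ∀ n x, IsProbabilityMeasure (P n x))
    {C : ℕ → Set R} (hC : ∀ n, MeasurableSet (C n)) (hlam1 : lam1 (C 0) = 1)
    (hlam2 : lam2 (C 0) = 1) (habsorb : ∀ n, ∀ x ∈ C n, P (n + 1) x (C (n + 1)) = 1)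
    {c : ℕ → ℝ} (hc0 : ∀ n, 0 ≤ c n) (hc1 : ∀ n, c n ≤ 1)
    {ν : ℕ → Measure R} (hν : ∀ n, IsProbabilityMeasure (ν n))
    (hmin : ∀ n, ∀ x ∈ C n, ∀ A, MeasurableSet A →
      ENNReal.ofReal (c (n + 1)) * ν (n + 1) A ≤ P (n + 1) x A) (n : ℕ) :
    tvDist (pushSeq lam1 P n) (pushSeq lam2 P n) ≤
      (∏ i ∈ Icc 1 n, (1 - c i)) * tvDist lam1 lam2 := by
  induction n with
  | zero => simp [pushSeq]
  | succ n ih =>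
    have := isProbabilityMeasure_pushSeq hP hPp (lam := lam1) n
    have := isProbabilityMeasure_pushSeq hP hPp (lam := lam2) n
    calc tvDist (pushSeq lam1 P (n + 1)) (pushSeq lam2 P (n + 1))
        ≤ (1 - c (n + 1)) * tvDist (pushSeq lam1 P n) (pushSeq lam2 P n) :=
          tvDist_bind_le_of_minorized (hP _) (hPp _) (hC n)
            (pushSeq_apply_eq_one hP hPp hC hlam1 habsorb n)
            (pushSeq_apply_eq_one hP hPp hC hlam2 habsorb n) (hc0 _) (hc1 _) (hmin n)
      _ ≤ (1 - c (n + 1)) * ((∏ i ∈ Icc 1 n, (1 - c i)) * tvDist lam1 lam2) := by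
          gcongr; linarith [hc1 (n + 1)]
      _ = (∏ i ∈ Icc 1 (n + 1), (1 - c i)) * tvDist lam1 lam2 := by
          rw [prod_Icc_succ_top (by omega)]; ring

end Sequence

lemma one_sub_le_one_sub_sq_div_one_add_sq {x : ℝ} (hx : 0 ≤ x) :
    1 - x ≤ (1 - x ^ 2) / (1 + x ^ 2) := by
  rw [le_div_iff₀ (by positivity)]
  nlinarith [mul_nonneg hx (sq_nonneg (1 - x))]

lemma one_le_two_div_sq_mul_log_three {x : ℝ} (hx0 : 0 < x) (hx1 : x ≤ 1) :
    1 ≤ 2 / (x ^ 2 * Real.log 3) := by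
  have hlog : Real.log 3 ≤ 2 := by
    linarith [Real.log_le_sub_one_of_pos (by norm_num : (0 : ℝ) < 3)]
  have hlog0 : 0 < Real.log 3 := Real.log_pos (by norm_num)
  rw [le_div_iff₀ (by positivity)]
  nlinarith [pow_le_one₀ hx0.le hx1 (n := 2)]

lemma prod_one_sub_le_mixing_rate {ε : ℕ → ℝ} (hε : ∀ n, ε n ∈ Set.Ioo (0 : ℝ) 1) (k : ℕ) :
    ∏ i ∈ Icc 1 k, (1 - ε i) ≤
      2 / ((ε 1) ^ 2 * Real.log 3) * ∏ i ∈ Icc 2 k, (1 - (ε i) ^ 2) / (1 + (ε i) ^ 2) := by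
  have hε0 i : 0 ≤ ε i := (hε i).1.le
  have hε1 i : ε i ≤ 1 := (hε i).2.le
  calc ∏ i ∈ Icc 1 k, (1 - ε i) ≤ ∏ i ∈ Icc 2 k, (1 - ε i) :=
        prod_le_prod_of_subset_of_le_one (Icc_subset_Icc_left one_le_two)
          (fun i _ => by linarith [hε1 i]) (fun i _ _ => by linarith [hε0 i])
    _ ≤ ∏ i ∈ Icc 2 k, (1 - (ε i) ^ 2) / (1 + (ε i) ^ 2) :=
        prod_le_prod (fun i _ => by linarith [hε1 i])
          (fun i _ => one_sub_le_one_sub_sq_div_one_add_sq (hε0 i))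
    _ ≤ 2 / ((ε 1) ^ 2 * Real.log 3) * ∏ i ∈ Icc 2 k, (1 - (ε i) ^ 2) / (1 + (ε i) ^ 2) :=
        le_mul_of_one_le_left
          (prod_nonneg fun i _ => (sub_nonneg.2 (by linarith [hε1 i])).trans
            (one_sub_le_one_sub_sq_div_one_add_sq (hε0 i)))
          (one_le_two_div_sq_mul_log_three (hε 1).1 (hε1 1))

theorem tv_contraction_of_local_mixing_general
    {R : Type*} [MeasurableSpace R]
    (lam1 lam2 : Measure R) [IsProbabilityMeasure lam1] [IsProbabilityMeasure lam2]
    (P : ℕ → R → Measure R)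
    (hPmeas : ∀ n, Measurable (P n))
    (hPprob : ∀ n x, IsProbabilityMeasure (P n x))
    (C : ℕ → Set R) (hCmeas : ∀ n, MeasurableSet (C n))
    (ε : ℕ → ℝ) (hε : ∀ n, ε n ∈ Set.Ioo (0 : ℝ) 1)
    (ν : ℕ → Measure R) (hνprob : ∀ n, IsProbabilityMeasure (ν n))
    (hconc1 : lam1 (C 0) = 1) (hconc2 : lam2 (C 0) = 1)
    (habsorb : ∀ n ≥ 1, ∀ x ∈ C (n - 1), (P n x) (C n) = 1)
    (hmix : ∀ n ≥ 1, ∀ x ∈ C (n - 1), ∀ A : Set R, MeasurableSet A →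
      ENNReal.ofReal (ε n) * (ν n) A ≤ (P n x) A ∧
        (P n x) A ≤ ENNReal.ofReal (ε n)⁻¹ * (ν n) A)
    (k : ℕ) :
    tvDist (pushSeq lam1 P k) (pushSeq lam2 P k) ≤
      (2 / ((ε 1) ^ 2 * Real.log 3) * ∏ i ∈ Finset.Icc 2 k, (1 - (ε i) ^ 2) / (1 + (ε i) ^ 2))
        * tvDist lam1 lam2 := by
  have hdoeblin := tvDist_pushSeq_le_prod hPmeas hPprob hCmeas hconc1 hconc2
    (fun n x hx => habsorb (n + 1) (Nat.le_add_left 1 n) x hx)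
    (fun n => (hε n).1.le) (fun n => (hε n).2.le) hνprob
    (fun n x hx A hA => (hmix (n + 1) (Nat.le_add_left 1 n) x hx A hA).1) k
  exact hdoeblin.trans
    (mul_le_mul_of_nonneg_right (prod_one_sub_le_mixing_rate hε k) (tvDist_nonneg lam1 lam2))

/-- Proposition 2: under local mixing of the kernels, compositions contract
the total variation distance at rate `ϑ_k`. -/
theorem tv_contraction_of_local_mixing
    {R : Type*} [MeasurableSpace R]
    (lam1 lam2 : Measure R) [IsProbabilityMeasure lam1] [IsProbabilityMeasure lam2]
    (P : ℕ → R → Measure R)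
    (hPmeas : ∀ n, Measurable (P n))
    (hPprob : ∀ n x, IsProbabilityMeasure (P n x))
    (C : ℕ → Set R) (hCmeas : ∀ n, MeasurableSet (C n))
    (ε : ℕ → ℝ) (hε : ∀ n, ε n ∈ Set.Ioo (0 : ℝ) 1)
    (ν : ℕ → Measure R) (hνprob : ∀ n, IsProbabilityMeasure (ν n))
    (hνconc : ∀ n ≥ 1, (ν n) (C n) = 1)
    (hconc1 : lam1 (C 0) = 1) (hconc2 : lam2 (C 0) = 1)
    (habsorb : ∀ n ≥ 1, ∀ x ∈ C (n - 1), (P n x) (C n) = 1)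
    (hmix : ∀ n ≥ 1, ∀ x ∈ C (n - 1), ∀ A : Set R, MeasurableSet A →
      ENNReal.ofReal (ε n) * (ν n) A ≤ (P n x) A ∧
        (P n x) A ≤ ENNReal.ofReal (ε n)⁻¹ * (ν n) A)
    (k : ℕ) (hk : 1 ≤ k) :
    tvDist (pushSeq lam1 P k) (pushSeq lam2 P k) ≤
      (2 / ((ε 1) ^ 2 * Real.log 3) * ∏ i ∈ Finset.Icc 2 k, (1 - (ε i) ^ 2) / (1 + (ε i) ^ 2))
        * tvDist lam1 lam2 :=
  tv_contraction_of_local_mixing_general lam1 lam2 P hPmeas hPprob C hCmeas ε hε ν hνprob hconc1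
    hconc2 habsorb hmix k
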